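/- For all t > 0, the Gamma function satisfies √(2π)·t^(t−1/2)·e^(−t) ≤ Γ(t) ≤ √(2π)·t^(t−1/2)·e^(−t)·e^(1/(12t)). -/

import Mathlib

/-!
Write `Γ(t) = √(2π) t^(t-1/2) e^(-t) e^(μ(t))`, with `μ = stirlingRemainder`. Since
`Γ(t+1) = t Γ(t)`, the difference `μ(t) - μ(t+1) = (t + 1/2) log(1 + 1/t) - 1` is a series of
positive terms dominated by a geometric series summing to `1/(12t) - 1/(12(t+1))`. Hence, along
`t + n`, `μ` decreases and `μ - 1/(12 ·)` increases. Both tend to `0`: by the Gauss product for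
`Γ`, `μ(t + n + 1)` differs from the logarithm of the Stirling sequence of `n!` by a null
sequence, and that sequence tends to `log √π`. So `0 ≤ μ(t) ≤ 1/(12t)`.
-/

open Real Filter Topology
open scoped Nat

lemma hasSum_mul_log_one_add_inv_sub_one {t : ℝ} (ht : 0 < t) :
    HasSum (fun k : ℕ => 1 / (2 * (k + 1 : ℝ) + 1) * ((1 / (2 * t + 1)) ^ 2) ^ (k + 1))
      ((t + 1/2) * log (1 + t⁻¹) - 1) := by
  have h := (hasSum_nat_add_iff' 1).mpr ((hasSum_log_one_add_inv ht).mul_left (t + 1/2))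
  convert h using 2 with k
  · rfl
  · push_cast
    rw [← pow_mul, pow_succ _ (2 * (k + 1))]
    field_simp
  · simp only [Finset.sum_range_one, Nat.cast_zero, mul_zero, zero_add, pow_one]
    field_simp

lemma mul_log_one_add_inv_sub_one_le {t : ℝ} (ht : 0 < t) :
    (t + 1/2) * log (1 + t⁻¹) - 1 ≤ 1 / (12 * t) - 1 / (12 * (t + 1)) := by
  obtain ⟨y, hy⟩ : ∃ y, (1 / (2 * t + 1)) ^ 2 = y := ⟨_, rfl⟩
  have hy0 : 0 ≤ y := hy ▸ by positivity
  have hy1 : y < 1 := by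
    rw [← hy, one_div, inv_pow]
    exact inv_lt_one_of_one_lt₀ (one_lt_pow₀ (by linarith) two_ne_zero)
  have geom : HasSum (fun k : ℕ => y ^ (k + 1) / 3) (y / (1 - y) / 3) := by
    simpa only [← pow_succ, inv_mul_eq_div] using
      ((hasSum_geometric_of_lt_one hy0 hy1).mul_right y).div_const 3
  have hsum : y / (1 - y) / 3 = 1 / (12 * t) - 1 / (12 * (t + 1)) := by
    have : (2 * t + 1) ^ 2 - 1 ≠ 0 := by nlinarith
    rw [← hy]
    field_simp
    ring
  -- the `k`-th term is `y^(k+1) / (2k+3) ≤ y^(k+1) / 3`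
  refine hsum ▸ hasSum_le (fun k => ?_) (hy ▸ hasSum_mul_log_one_add_inv_sub_one ht) geom
  rw [one_div, div_eq_inv_mul]
  gcongr
  linarith [(k.cast_nonneg : (0 : ℝ) ≤ k)]

noncomputable def stirlingRemainder (t : ℝ) : ℝ :=
  log (Gamma t) - ((t - 1/2) * log t - t + log √(2 * π))

lemma stirlingRemainder_sub_add_one {t : ℝ} (ht : 0 < t) :
    stirlingRemainder t - stirlingRemainder (t + 1) = (t + 1/2) * log (1 + t⁻¹) - 1 := by
  have hlog : log (1 + t⁻¹) = log (t + 1) - log t := by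
    rw [← log_div (by positivity) ht.ne', add_div, div_self ht.ne', one_div]
  rw [stirlingRemainder, stirlingRemainder, Gamma_add_one ht.ne',
    log_mul ht.ne' (Gamma_pos_of_pos ht).ne', hlog]
  ring

lemma antitone_stirlingRemainder_add_nat {t : ℝ} (ht : 0 < t) :
    Antitone fun n : ℕ => stirlingRemainder (t + n) := by
  refine antitone_nat_of_succ_le fun n => ?_
  have hstep := stirlingRemainder_sub_add_one (t := t + n) (by positivity)
  have hpos := (hasSum_mul_log_one_add_inv_sub_one (t := t + n) (by positivity)).nonneg
    fun k => by positivity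
  push_cast
  rw [← add_assoc]
  linarith

lemma monotone_stirlingRemainder_add_nat_sub {t : ℝ} (ht : 0 < t) :
    Monotone fun n : ℕ => stirlingRemainder (t + n) - 1 / (12 * (t + n)) := by
  refine monotone_nat_of_le_succ fun n => ?_
  have hstep := stirlingRemainder_sub_add_one (t := t + n) (by positivity)
  have hle := mul_log_one_add_inv_sub_one_le (t := t + n) (by positivity)
  push_cast
  rw [← add_assoc]
  linarith

lemma tendsto_log_Gamma_add_nat_sub_log_factorial {t : ℝ} (ht : 0 < t) :
    Tendsto (fun n : ℕ => log (Gamma (t + (n + 1))) - log n ! - t * log n) atTop (𝓝 0) := by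
  have hfeq : ∀ {y : ℝ}, 0 < y → (log ∘ Gamma) (y + 1) = (log ∘ Gamma) y + log y := fun hy => by
    simp only [Function.comp_apply]
    rw [Gamma_add_one hy.ne', log_mul hy.ne' (Gamma_pos_of_pos hy).ne', add_comm]
  -- `logGammaSeq t n` is the logarithm of the Gauss product `n^t n! / (t (t+1) ⋯ (t+n))`
  have h := (BohrMollerup.tendsto_log_gamma ht).const_sub (log (Gamma t))
  rw [sub_self] at h
  refine h.congr fun n => ?_
  have := BohrMollerup.f_add_nat_eq hfeq ht (n + 1)
  simp only [Function.comp_apply, Nat.cast_add, Nat.cast_one] at this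
  rw [BohrMollerup.logGammaSeq, this]
  ring

lemma tendsto_add_mul_log_one_add_div (a b : ℝ) :
    Tendsto (fun n : ℕ => (n + b) * log (1 + a / n)) atTop (𝓝 a) := by
  have hmul : Tendsto (fun n : ℕ => n * log (1 + a / n)) atTop (𝓝 a) :=
    (tendsto_mul_log_one_add_div_atTop a).comp tendsto_natCast_atTop_atTop
  have hlog : Tendsto (fun n : ℕ => log (1 + a / n)) atTop (𝓝 0) := by
    simpa using ((tendsto_const_div_atTop_nhds_zero_nat a).const_add 1).log (by norm_num)
  simpa [add_mul] using hmul.add (hlog.const_mul b)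

lemma tendsto_stirlingRemainder_add_nat {t : ℝ} (ht : 0 < t) :
    Tendsto (fun n : ℕ => stirlingRemainder (t + n)) atTop (𝓝 0) := by
  rw [← tendsto_add_atTop_iff_nat 1]
  have hstirling : Tendsto (fun n : ℕ => log (Stirling.stirlingSeq n) - log √π) atTop (𝓝 0) := by
    simpa using (Stirling.tendsto_stirlingSeq_sqrt_pi.log (by positivity)).sub_const (log √π)
  have h := ((tendsto_log_Gamma_add_nat_sub_log_factorial ht).add hstirling).add
    ((tendsto_add_mul_log_one_add_div (t + 1) (t + 1/2)).const_sub (t + 1))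
  rw [add_zero, sub_self, add_zero] at h
  refine h.congr' ?_
  filter_upwards [eventually_ne_atTop 0] with n hn
  have hn : (0 : ℝ) < n := by positivity
  have hlog : log (t + ↑(n + 1)) = log n + log (1 + (t + 1) / n) := by
    rw [← log_mul hn.ne' (by positivity)]
    congr 1
    field_simp
    push_cast
    ring
  rw [stirlingRemainder, hlog, Stirling.log_stirlingSeq_formula, log_mul two_ne_zero hn.ne',
    log_div hn.ne' (exp_ne_zero 1), log_exp, log_sqrt pi_pos.le,
    log_sqrt (by positivity), log_mul two_ne_zero pi_ne_zero]
  push_cast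
  ring

lemma stirlingRemainder_nonneg {t : ℝ} (ht : 0 < t) : 0 ≤ stirlingRemainder t := by
  simpa using
    (antitone_stirlingRemainder_add_nat ht).le_of_tendsto (tendsto_stirlingRemainder_add_nat ht) 0

lemma stirlingRemainder_le {t : ℝ} (ht : 0 < t) : stirlingRemainder t ≤ 1 / (12 * t) := by
  have hinv : Tendsto (fun n : ℕ => 1 / (12 * (t + n))) atTop (𝓝 0) :=
    tendsto_const_nhds.div_atTop <|
      (tendsto_atTop_add_const_left _ t tendsto_natCast_atTop_atTop).const_mul_atTop (by norm_num)
  have h := (monotone_stirlingRemainder_add_nat_sub ht).ge_of_tendsto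
    ((tendsto_stirlingRemainder_add_nat ht).sub hinv) 0
  simp only [Nat.cast_zero, add_zero, sub_zero] at h
  linarith

lemma Gamma_eq_mul_exp_stirlingRemainder {t : ℝ} (ht : 0 < t) :
    Gamma t = √(2 * π) * t ^ (t - 1/2) * exp (-t) * exp (stirlingRemainder t) := by
  rw [stirlingRemainder, exp_sub, exp_log (Gamma_pos_of_pos ht), exp_add, exp_sub,
    exp_log (by positivity), rpow_def_of_pos ht, exp_neg]
  field_simp

theorem stmt_1 (t : ℝ) (ht : 0 < t) :
    Real.sqrt (2 * π) * t ^ (t - 1/2) * Real.exp (-t) ≤ Real.Gamma t ∧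
    Real.Gamma t ≤ Real.sqrt (2 * π) * t ^ (t - 1/2) * Real.exp (-t) * Real.exp (1 / (12 * t)) := by
  have hmain : 0 < √(2 * π) * t ^ (t - 1/2) * exp (-t) := by positivity
  rw [Gamma_eq_mul_exp_stirlingRemainder ht]
  exact ⟨le_mul_of_one_le_right hmain.le (one_le_exp (stirlingRemainder_nonneg ht)),
    by gcongr; exact stirlingRemainder_le ht⟩
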